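/- Let $A_\lambda = \{u \in L_\varphi(\mu) : I_\varphi(\lambda u) < \infty\}$. Then $\bigcap_{\lambda > 0} A_\lambda = \bigcap_{n \in \mathbb{N}} A_n$, and every $u$ in this intersection has absolutely continuous norm and is $\sigma$-finitely concentrated, i.e. $\bigcap_{\lambda > 0} A_\lambda \subset C_\varphi^\sigma(\mu)$. -/

import Mathlib

open MeasureTheory Filter Topology ENNReal

/-- An Orlicz integrand `φ : Ω × X → [0,∞]`: for a.e. `ω` the partial map `φ ω` is an
Orlicz function (even, convex, lsc, proper, vanishing continuously at the origin and
tending to `∞` at infinity), and `φ` is measurable in the sense that its composition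
with any strongly measurable function is measurable. -/
structure IsOrliczIntegrand {Ω X : Type*} [MeasurableSpace Ω]
    [NormedAddCommGroup X] [NormedSpace ℝ X]
    (μ : Measure Ω) (φ : Ω → X → ℝ≥0∞) : Prop where
  ae_even : ∀ᵐ ω ∂μ, ∀ x : X, φ ω (-x) = φ ω x
  ae_convex : ∀ᵐ ω ∂μ, ∀ x y : X, ∀ a b : ℝ, 0 ≤ a → 0 ≤ b → a + b = 1 →
    φ ω (a • x + b • y) ≤ ENNReal.ofReal a * φ ω x + ENNReal.ofReal b * φ ω y
  ae_lsc : ∀ᵐ ω ∂μ, LowerSemicontinuous (φ ω)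
  ae_proper : ∀ᵐ ω ∂μ, ∃ x, φ ω x ≠ ⊤
  ae_zero : ∀ᵐ ω ∂μ, Tendsto (φ ω) (nhds 0) (nhds 0)
  ae_coercive : ∀ᵐ ω ∂μ, Tendsto (φ ω) (Filter.comap norm Filter.atTop) (nhds ⊤)
  meas_comp : ∀ u : Ω → X, StronglyMeasurable u → Measurable fun ω => φ ω (u ω)

/-- The Orlicz modular `I_φ(u) = ∫ φ(ω, u(ω)) dμ(ω)`. -/
noncomputable def orliczModular {Ω X : Type*} [MeasurableSpace Ω]
    (μ : Measure Ω) (φ : Ω → X → ℝ≥0∞) (u : Ω → X) : ℝ≥0∞ :=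
  ∫⁻ ω, φ ω (u ω) ∂μ

/-- The Luxemburg norm `‖u‖_φ = inf {α > 0 : I_φ(u/α) ≤ 1}`. -/
noncomputable def luxNorm {Ω X : Type*} [MeasurableSpace Ω]
    [NormedAddCommGroup X] [NormedSpace ℝ X]
    (μ : Measure Ω) (φ : Ω → X → ℝ≥0∞) (u : Ω → X) : ℝ≥0∞ :=
  ⨅ a : {a : ℝ // 0 < a ∧ orliczModular μ φ (fun ω => a⁻¹ • u ω) ≤ 1},
    ENNReal.ofReal a

/-- Membership in the Orlicz space `L_φ(μ)`: strongly measurable with finite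
Luxemburg norm. -/
def MemOrlicz {Ω X : Type*} [MeasurableSpace Ω]
    [NormedAddCommGroup X] [NormedSpace ℝ X]
    (μ : Measure Ω) (φ : Ω → X → ℝ≥0∞) (u : Ω → X) : Prop :=
  StronglyMeasurable u ∧ luxNorm μ φ u < ⊤

/-- The Amemiya norm `⦀u⦀_φ = inf_{α>0} α⁻¹ (1 + I_φ(α u))`. -/
noncomputable def amemiyaNorm {Ω X : Type*} [MeasurableSpace Ω]
    [NormedAddCommGroup X] [NormedSpace ℝ X]
    (μ : Measure Ω) (φ : Ω → X → ℝ≥0∞) (u : Ω → X) : ℝ≥0∞ :=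
  ⨅ a : {a : ℝ // 0 < a},
    ENNReal.ofReal (a : ℝ)⁻¹ * (1 + orliczModular μ φ (fun ω => (a : ℝ) • u ω))

/-- A function is σ-finitely concentrated if it vanishes (a.e.) outside a σ-finite
measurable set. -/
def SigmaFiniteConc {Ω X : Type*} [MeasurableSpace Ω] [Zero X]
    (μ : MeasureTheory.Measure Ω) (u : Ω → X) : Prop :=
  ∃ S : Set Ω, MeasurableSet S ∧
    (∃ g : ℕ → Set Ω, S = ⋃ n, g n ∧ ∀ n, MeasurableSet (g n) ∧ μ (g n) < ⊤) ∧
    ∀ᵐ ω ∂μ, ω ∉ S → u ω = 0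

/-- `u` has absolutely continuous norm: `‖u χ_{E_n}‖_φ → 0` for every sequence of
measurable sets with `χ_{E_n} → 0` a.e. -/
def AbsContNorm {Ω X : Type*} [MeasurableSpace Ω]
    [NormedAddCommGroup X] [NormedSpace ℝ X]
    (μ : MeasureTheory.Measure Ω) (φ : Ω → X → ℝ≥0∞) (u : Ω → X) : Prop :=
  ∀ E : ℕ → Set Ω, (∀ n, MeasurableSet (E n)) →
    (∀ᵐ ω ∂μ, ∀ᶠ n in Filter.atTop, ω ∉ E n) →
    Filter.Tendsto (fun n => luxNorm μ φ ((E n).indicator u)) Filter.atTop (nhds 0)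

/-!
Since `φ(ω, 0) = 0`, convexity makes `t ↦ φ(ω, t x)` monotone on `[0, ∞)`, so
`I_φ(λ u) ≤ I_φ(⌈λ⌉ u)`. If `I_φ(u / c) < ∞`, dominated convergence gives
`I_φ(χ_{E_n} u / c) → 0`, hence `‖χ_{E_n} u‖_φ ≤ c` eventually. Finally, by coercivity of
`φ(ω, ·)`, `u` vanishes off `⋃ₙ {ω : φ(ω, (n + 1) u(ω)) ≥ 1}`, and each of these sets has
finite measure by Markov's inequality.
-/

section OrliczFunction

variable {X : Type*}

theorem apply_smul_le_of_convex [AddCommGroup X] [Module ℝ X] {f : X → ℝ≥0∞}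
    (hconv : ∀ x y : X, ∀ a b : ℝ, 0 ≤ a → 0 ≤ b → a + b = 1 →
      f (a • x + b • y) ≤ ENNReal.ofReal a * f x + ENNReal.ofReal b * f y)
    (h0 : f 0 = 0) (x : X) {t : ℝ} (ht0 : 0 ≤ t) (ht1 : t ≤ 1) :
    f (t • x) ≤ f x := by
  have h := hconv x 0 t (1 - t) ht0 (by linarith) (by ring)
  rw [smul_zero, add_zero, h0, mul_zero, add_zero] at h
  calc f (t • x) ≤ ENNReal.ofReal t * f x := h
    _ ≤ 1 * f x := by gcongr; exact ENNReal.ofReal_le_one.mpr ht1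
    _ = f x := one_mul _

theorem tendsto_natCast_smul_comap_norm_atTop [NormedAddCommGroup X] [NormedSpace ℝ X]
    {x : X} (hx : x ≠ 0) :
    Tendsto (fun n : ℕ => (n : ℝ) • x) atTop (comap norm atTop) := by
  refine tendsto_comap_iff.mpr ?_
  simp only [Function.comp_def, norm_smul, Real.norm_natCast]
  exact tendsto_natCast_atTop_atTop.atTop_mul_const (norm_pos_iff.mpr hx)

end OrliczFunction

section OrliczModular

variable {Ω X : Type*} [MeasurableSpace Ω] [NormedAddCommGroup X] [NormedSpace ℝ X]
  {μ : Measure Ω} {φ : Ω → X → ℝ≥0∞}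

theorem luxNorm_le_ofReal {u : Ω → X} {a : ℝ} (ha : 0 < a)
    (hu : orliczModular μ φ (fun ω => a⁻¹ • u ω) ≤ 1) :
    luxNorm μ φ u ≤ ENNReal.ofReal a :=
  iInf_le (fun a : {a : ℝ // 0 < a ∧ orliczModular μ φ (fun ω => a⁻¹ • u ω) ≤ 1} =>
    ENNReal.ofReal (a : ℝ)) ⟨a, ha, hu⟩

namespace IsOrliczIntegrand

theorem ae_apply_zero (hφ : IsOrliczIntegrand μ φ) : ∀ᵐ ω ∂μ, φ ω 0 = 0 := by
  filter_upwards [hφ.ae_zero] with ω hω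
  exact tendsto_nhds_unique (tendsto_pure_nhds _ _) (hω.mono_left (pure_le_nhds 0))

theorem ae_apply_smul_le (hφ : IsOrliczIntegrand μ φ) :
    ∀ᵐ ω ∂μ, ∀ x : X, ∀ t : ℝ, 0 ≤ t → t ≤ 1 → φ ω (t • x) ≤ φ ω x := by
  filter_upwards [hφ.ae_convex, hφ.ae_apply_zero] with ω hconv h0
  exact fun x t => apply_smul_le_of_convex hconv h0 x

theorem orliczModular_smul_mono (hφ : IsOrliczIntegrand μ φ) (u : Ω → X) {s t : ℝ}
    (hs : 0 ≤ s) (hst : s ≤ t) :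
    orliczModular μ φ (s • u) ≤ orliczModular μ φ (t • u) := by
  obtain rfl | ht := (hs.trans hst).eq_or_lt
  · rw [le_antisymm hst hs]
  refine lintegral_mono_ae ?_
  filter_upwards [hφ.ae_apply_smul_le] with ω hmono
  have hsu : s • u ω = (s / t) • t • u ω := by rw [smul_smul, div_mul_cancel₀ _ ht.ne']
  simpa only [Pi.smul_apply, hsu] using
    hmono (t • u ω) (s / t) (div_nonneg hs ht.le) ((div_le_one ht).mpr hst)

theorem tendsto_orliczModular_indicator (hφ : IsOrliczIntegrand μ φ) {v : Ω → X}
    (hv : StronglyMeasurable v) (hfin : orliczModular μ φ v ≠ ⊤) {E : ℕ → Set Ω}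
    (hE : ∀ n, MeasurableSet (E n))
    (hEae : ∀ᵐ ω ∂μ, ∀ᶠ n in atTop, ω ∉ E n) :
    Tendsto (fun n => orliczModular μ φ ((E n).indicator v)) atTop (𝓝 0) := by
  have hF_le : ∀ n, ∀ᵐ ω ∂μ, φ ω ((E n).indicator v ω) ≤ φ ω (v ω) := fun n => by
    filter_upwards [hφ.ae_apply_zero] with ω h0
    by_cases hω : ω ∈ E n
    · rw [Set.indicator_of_mem hω]
    · rw [Set.indicator_of_notMem hω, h0]; exact bot_le
  have hF_lim : ∀ᵐ ω ∂μ, Tendsto (fun n => φ ω ((E n).indicator v ω)) atTop (𝓝 0) := by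
    filter_upwards [hEae, hφ.ae_apply_zero] with ω hev h0
    refine tendsto_const_nhds.congr' ?_
    filter_upwards [hev] with n hn
    rw [Set.indicator_of_notMem hn, h0]
  simpa [orliczModular] using tendsto_lintegral_of_dominated_convergence _
    (fun n => hφ.meas_comp _ (hv.indicator (hE n))) hF_le hfin hF_lim

theorem absContNorm_of_orliczModular_smul_lt_top (hφ : IsOrliczIntegrand μ φ) {u : Ω → X}
    (hu : StronglyMeasurable u)
    (hfin : ∀ c : ℝ, 0 < c → orliczModular μ φ (c • u) < ⊤) :
    AbsContNorm μ φ u := by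
  intro E hE hEae
  refine ENNReal.tendsto_nhds_zero.mpr fun ε hε => ?_
  obtain ⟨c, hc, hcε⟩ : ∃ c : ℝ, 0 < c ∧ ENNReal.ofReal c ≤ ε := by
    obtain rfl | hne := eq_or_ne ε ⊤
    · exact ⟨1, one_pos, le_top⟩
    · exact ⟨ε.toReal, ENNReal.toReal_pos hε.ne' hne, (ENNReal.ofReal_toReal hne).le⟩
  have hlim := hφ.tendsto_orliczModular_indicator (hu.const_smul c⁻¹)
    (hfin _ (inv_pos.mpr hc)).ne hE hEae
  filter_upwards [hlim.eventually_le_const one_pos] with n hn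
  refine (luxNorm_le_ofReal hc ?_).trans hcε
  rwa [← Set.indicator_const_smul]

theorem sigmaFiniteConc_of_orliczModular_smul_lt_top (hφ : IsOrliczIntegrand μ φ) {u : Ω → X}
    (hu : StronglyMeasurable u)
    (hfin : ∀ c : ℝ, 0 < c → orliczModular μ φ (c • u) < ⊤) :
    SigmaFiniteConc μ u := by
  have hmeas : ∀ n : ℕ, Measurable fun ω => φ ω (((n : ℝ) + 1) • u ω) :=
    fun n => hφ.meas_comp _ (hu.const_smul _)
  set g : ℕ → Set Ω := fun n => {ω | 1 ≤ φ ω (((n : ℝ) + 1) • u ω)}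
  have hg : ∀ n, MeasurableSet (g n) := fun n => measurableSet_le measurable_const (hmeas n)
  have hμg : ∀ n, μ (g n) < ⊤ := fun n =>
    calc μ (g n) = 1 * μ (g n) := (one_mul _).symm
      _ ≤ orliczModular μ φ (((n : ℝ) + 1) • u) :=
        mul_meas_ge_le_lintegral₀ (hmeas n).aemeasurable 1
      _ < ⊤ := hfin _ (by positivity)
  refine ⟨⋃ n, g n, .iUnion hg, ⟨g, rfl, fun n => ⟨hg n, hμg n⟩⟩, ?_⟩
  filter_upwards [hφ.ae_coercive] with ω hcoer hω
  by_contra hu0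
  have hlim : Tendsto (fun n : ℕ => φ ω (((n + 1 : ℕ) : ℝ) • u ω)) atTop (𝓝 ⊤) :=
    hcoer.comp ((tendsto_natCast_smul_comap_norm_atTop hu0).comp (tendsto_add_atTop_nat 1))
  obtain ⟨n, hn⟩ := (hlim.eventually_const_lt one_lt_top).exists
  exact hω (Set.mem_iUnion.mpr ⟨n, by simpa [g] using hn.le⟩)

end IsOrliczIntegrand

end OrliczModular

/-- For `A_λ = {u ∈ L_φ : I_φ(λ u) < ∞}`, the intersection over all
`λ > 0` equals the intersection over positive naturals, and it is contained in
`C_φ^σ(μ)` (elements with absolutely continuous norm vanishing off a σ-finite set). -/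
theorem inter_Alambda_subset_Csigma {Ω X : Type*} [MeasurableSpace Ω]
    [NormedAddCommGroup X] [NormedSpace ℝ X]
    (μ : Measure Ω) (φ : Ω → X → ℝ≥0∞) (hφ : IsOrliczIntegrand μ φ) :
    (⋂ (l : ℝ) (_ : 0 < l),
        {u : Ω → X | MemOrlicz μ φ u ∧ orliczModular μ φ (l • u) < ⊤}) =
      (⋂ (n : ℕ) (_ : 0 < n),
        {u : Ω → X | MemOrlicz μ φ u ∧ orliczModular μ φ ((n : ℝ) • u) < ⊤}) ∧
    (⋂ (l : ℝ) (_ : 0 < l),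
        {u : Ω → X | MemOrlicz μ φ u ∧ orliczModular μ φ (l • u) < ⊤}) ⊆
      {u : Ω → X | MemOrlicz μ φ u ∧ AbsContNorm μ φ u ∧ SigmaFiniteConc μ u} := by
  simp only [Set.subset_def, Set.Subset.antisymm_iff, Set.mem_iInter, Set.mem_ofPred_eq]
  refine ⟨⟨fun u hu n hn => hu n (Nat.cast_pos.mpr hn), fun u hu l hl => ?_⟩, fun u hu => ?_⟩
  · obtain ⟨hmem, hfin⟩ := hu ⌈l⌉₊ (Nat.ceil_pos.mpr hl)
    exact ⟨hmem, (hφ.orliczModular_smul_mono u hl.le (Nat.le_ceil l)).trans_lt hfin⟩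
  · have hmem := (hu 1 one_pos).1
    have hfin := fun c hc => (hu c hc).2
    exact ⟨hmem, hφ.absContNorm_of_orliczModular_smul_lt_top hmem.1 hfin,
      hφ.sigmaFiniteConc_of_orliczModular_smul_lt_top hmem.1 hfin⟩
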